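/- arXiv:0801.1701 — 3 statements merged into one kernel-verified Lean document; each statement's English description precedes it below -/
import Mathlib

section
/- For t ∨ t′ ≤ s ∨ s′ and |y| ≥ s ∨ s′, and any positive integers K₁′, K₂′, there exist K₁, K₂ (one may take K₁ = K₁′ + K₂′, K₂ ≥ K₂′) and a constant C such that ∫_{ℝᵐ} [(t∨t′)^{K₁} / (t∨t′ + |x| + |y−z|)^{n+m+K₁}] · [(s∨s′)^{K₂} / (s∨s′ + |z|)^{m+K₂}] dz ≤ C · (t∨t′)^{K₁′}/(t∨t′ + |x|)^{n+K₁′} · (s∨s′)^{K₂′}/(s∨s′ + |y|)^{m+K₂′}. -/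
open MeasureTheory

set_option maxHeartbeats 1000000
open MeasureTheory

lemma aux_integrable {m k : ℕ} (hm : 0 < m) (hk : 0 < k) :
    Integrable (fun w : Fin m → ℝ => ((1 + ‖w‖) ^ (m + k) : ℝ)⁻¹) := by
  have h : ((m : ℝ)) < ((m + k : ℕ) : ℝ) := by exact_mod_cast Nat.lt_add_of_pos_right hk
  have := integrable_one_add_norm (E := Fin m → ℝ) (μ := volume)
    (r := (m + k : ℕ)) (by rw [Module.finrank_fin_fun]; exact_mod_cast h)
  refine this.congr (Filter.Eventually.of_forall fun w => ?_)
  have h1 : (0:ℝ) < 1 + ‖w‖ := by positivity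
  simp only [Real.rpow_neg h1.le, Real.rpow_natCast]

lemma aux_scale {m k : ℕ} (hm : 0 < m) (hk : 0 < k) {a : ℝ} (ha : 0 < a) :
    Integrable (fun z : Fin m → ℝ => a ^ k / (a + ‖z‖) ^ (m + k)) ∧
    ∫ z : Fin m → ℝ, a ^ k / (a + ‖z‖) ^ (m + k) =
      ∫ w : Fin m → ℝ, ((1 + ‖w‖) ^ (m + k) : ℝ)⁻¹ := by
  set f : (Fin m → ℝ) → ℝ := fun w => ((1 + ‖w‖) ^ (m + k) : ℝ)⁻¹ with hf
  have key : ∀ z : Fin m → ℝ, a ^ k / (a + ‖z‖) ^ (m + k) = (a ^ m)⁻¹ * f (a⁻¹ • z) := by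
    intro z
    have hz : ‖a⁻¹ • z‖ = a⁻¹ * ‖z‖ := by
      rw [norm_smul, Real.norm_eq_abs, abs_of_pos (inv_pos.2 ha)]
    have h1 : (1 : ℝ) + ‖a⁻¹ • z‖ = a⁻¹ * (a + ‖z‖) := by
      rw [hz]; field_simp
    have h2 : (0:ℝ) < a + ‖z‖ := by positivity
    simp only [hf, h1, mul_pow, pow_add, inv_pow]
    field_simp
  have hint : Integrable (fun z : Fin m → ℝ => f (a⁻¹ • z)) :=
    (aux_integrable hm hk).comp_smul (inv_ne_zero ha.ne')
  constructor
  · refine (hint.const_mul ((a ^ m)⁻¹)).congr (Filter.Eventually.of_forall fun z => ?_)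
    exact (key z).symm
  · have := Measure.integral_comp_smul (volume : Measure (Fin m → ℝ)) f a⁻¹
    rw [Module.finrank_fin_fun] at this
    simp only [key, integral_const_mul, this, smul_eq_mul]
    rw [inv_pow, inv_inv, abs_of_pos (pow_pos ha m)]
    field_simp

/-- Case 1 of Lemma 3.4: for `max t t' ≤ max s s'` and `|y| ≥ max s s'`, given positive
integers `K₁', K₂'` one may choose `K₁ = K₁' + K₂'` and `K₂ ≥ K₂'` and a constant `C` so that
`∫ (t∨t')^{K₁}/(t∨t'+|x|+|y-z|)^{n+m+K₁} · (s∨s')^{K₂}/(s∨s'+|z|)^{m+K₂} dz ≤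
 C (t∨t')^{K₁'}/(t∨t'+|x|)^{n+K₁'} · (s∨s')^{K₂'}/(s∨s'+|y|)^{m+K₂'}`. -/
theorem stmt1 {n m : ℕ} (hn : 0 < n) (hm : 0 < m)
    (K₁' K₂' : ℕ) (hK₁' : 0 < K₁') (hK₂' : 0 < K₂') :
    ∃ (K₁ K₂ : ℕ) (C : ℝ), K₁ = K₁' + K₂' ∧ K₂' ≤ K₂ ∧ 0 < C ∧
      ∀ (t t' s s' : ℝ) (x : Fin n → ℝ) (y : Fin m → ℝ),
        0 < t → 0 < t' → 0 < s → 0 < s' →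
        max t t' ≤ max s s' → max s s' ≤ ‖y‖ →
        (∫ z : Fin m → ℝ,
            (max t t' ^ K₁ / (max t t' + ‖x‖ + ‖y - z‖) ^ (n + m + K₁)) *
            (max s s' ^ K₂ / (max s s' + ‖z‖) ^ (m + K₂))) ≤
          C * (max t t' ^ K₁' / (max t t' + ‖x‖) ^ (n + K₁')) *
            (max s s' ^ K₂' / (max s s' + ‖y‖) ^ (m + K₂')) := by
  set Cm := ∫ w : Fin m → ℝ, ((1 + ‖w‖) ^ (m + K₂') : ℝ)⁻¹ with hCmdef
  have hCm0 : 0 ≤ Cm := integral_nonneg fun w => by positivity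
  refine ⟨K₁' + K₂', K₂', 2 * 4 ^ (m + K₂') * (Cm + 1), rfl, le_refl _, by positivity, ?_⟩
  intro t t' s s' x y ht ht' hs hs' hts hsy
  set T := max t t' with hTdef
  set S := max s s' with hSdef
  have hT : 0 < T := lt_max_of_lt_left ht
  have hS : 0 < S := lt_max_of_lt_left hs
  have hy : 0 < ‖y‖ := lt_of_lt_of_le hS hsy
  set A := T ^ K₁' / (T + ‖x‖) ^ (n + K₁') with hAdef
  set D := S ^ K₂' / (S + ‖y‖) ^ (m + K₂') with hDdef
  have hA0 : 0 ≤ A := by positivity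
  have hD0 : 0 ≤ D := by positivity
  set p := m + K₂' with hpdef
  set B := (4 : ℝ) ^ p * D with hBdef
  have hB0 : 0 ≤ B := by positivity
  set h₁ : (Fin m → ℝ) → ℝ := fun z => S ^ K₂' / (S + ‖z‖) ^ p with hh₁
  set h₂ : (Fin m → ℝ) → ℝ := fun z => T ^ K₂' / (T + ‖y - z‖) ^ p with hh₂
  have hh₁0 : ∀ z, 0 ≤ h₁ z := fun z => by simp only [hh₁]; positivity
  have hh₂0 : ∀ z, 0 ≤ h₂ z := fun z => by simp only [hh₂]; positivity
  -- pointwise bound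
  have hbound : ∀ z : Fin m → ℝ,
      (T ^ (K₁' + K₂') / (T + ‖x‖ + ‖y - z‖) ^ (n + m + (K₁' + K₂'))) *
        (S ^ K₂' / (S + ‖z‖) ^ (m + K₂')) ≤ A * B * (h₁ z + h₂ z) := by
    intro z
    have hd1 : (0:ℝ) < T + ‖x‖ := by positivity
    have hd2 : (0:ℝ) < T + ‖y - z‖ := by positivity
    have hd3 : (0:ℝ) < T + ‖x‖ + ‖y - z‖ := by positivity
    have step1 : T ^ (K₁' + K₂') / (T + ‖x‖ + ‖y - z‖) ^ (n + m + (K₁' + K₂')) ≤ A * h₂ z := by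
      have e1 : n + m + (K₁' + K₂') = (n + K₁') + p := by simp only [hpdef]; ring
      rw [e1, pow_add, pow_add, ← div_mul_div_comm]
      have b1 : T ^ K₁' / (T + ‖x‖ + ‖y - z‖) ^ (n + K₁') ≤ A := by
        rw [hAdef]
        apply div_le_div_of_nonneg_left (by positivity) (by positivity)
        exact pow_le_pow_left₀ hd1.le (by linarith [norm_nonneg (y - z)]) _
      have b2 : T ^ K₂' / (T + ‖x‖ + ‖y - z‖) ^ p ≤ h₂ z := by
        simp only [hh₂]
        apply div_le_div_of_nonneg_left (by positivity) (by positivity)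
        exact pow_le_pow_left₀ hd2.le (by linarith [norm_nonneg x]) _
      exact mul_le_mul b1 b2 (by positivity) hA0
    have step2 : h₂ z * h₁ z ≤ B * (h₁ z + h₂ z) := by
      rcases le_or_gt ‖z‖ (‖y‖ / 2) with hcase | hcase
      · -- ‖y - z‖ large
        have hyz : (S + ‖y‖) / 4 ≤ T + ‖y - z‖ := by
          have := norm_sub_norm_le y z
          linarith
        have key : h₂ z ≤ B := by
          simp only [hh₂, hBdef, hDdef]
          have h4 : ((S + ‖y‖) / 4) ^ p ≤ (T + ‖y - z‖) ^ p :=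
            pow_le_pow_left₀ (by positivity) hyz _
          calc T ^ K₂' / (T + ‖y - z‖) ^ p ≤ S ^ K₂' / ((S + ‖y‖) / 4) ^ p := by
                apply div_le_div₀ (by positivity) (pow_le_pow_left₀ hT.le hts _)
                  (by positivity) h4
            _ = 4 ^ p * (S ^ K₂' / (S + ‖y‖) ^ p) := by
                rw [div_pow]
                field_simp
        nlinarith [mul_le_mul_of_nonneg_right key (hh₁0 z), mul_nonneg hB0 (hh₂0 z)]
      · -- ‖z‖ large
        have hz4 : (S + ‖y‖) / 4 ≤ S + ‖z‖ := by linarith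
        have key : h₁ z ≤ B := by
          simp only [hh₁, hBdef, hDdef]
          have h4 : ((S + ‖y‖) / 4) ^ p ≤ (S + ‖z‖) ^ p :=
            pow_le_pow_left₀ (by positivity) hz4 _
          calc S ^ K₂' / (S + ‖z‖) ^ p ≤ S ^ K₂' / ((S + ‖y‖) / 4) ^ p := by
                apply div_le_div_of_nonneg_left (by positivity) (by positivity) h4
            _ = 4 ^ p * (S ^ K₂' / (S + ‖y‖) ^ p) := by
                rw [div_pow]
                field_simp
        nlinarith [mul_le_mul_of_nonneg_right key (hh₂0 z), mul_nonneg hB0 (hh₁0 z)]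
    calc (T ^ (K₁' + K₂') / (T + ‖x‖ + ‖y - z‖) ^ (n + m + (K₁' + K₂'))) *
          (S ^ K₂' / (S + ‖z‖) ^ (m + K₂'))
        ≤ (A * h₂ z) * h₁ z := mul_le_mul_of_nonneg_right step1 (hh₁0 z)
      _ = A * (h₂ z * h₁ z) := by ring
      _ ≤ A * (B * (h₁ z + h₂ z)) := mul_le_mul_of_nonneg_left step2 hA0
      _ = A * B * (h₁ z + h₂ z) := by ring
  -- integrability
  have hint1 : Integrable h₁ := (aux_scale hm hK₂' hS).1
  have hintH : Integrable (fun w : Fin m → ℝ => T ^ K₂' / (T + ‖w‖) ^ p) :=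
    (aux_scale hm hK₂' hT).1
  have hint2 : Integrable h₂ := hintH.comp_sub_left y
  have hI1 : ∫ z, h₁ z = Cm := (aux_scale hm hK₂' hS).2
  have hI2 : ∫ z, h₂ z = Cm := by
    have := integral_sub_left_eq_self (fun w : Fin m → ℝ => T ^ K₂' / (T + ‖w‖) ^ p) volume y
    simp only [hh₂]
    rw [this]
    exact (aux_scale hm hK₂' hT).2
  have hmono : (∫ z : Fin m → ℝ,
      (T ^ (K₁' + K₂') / (T + ‖x‖ + ‖y - z‖) ^ (n + m + (K₁' + K₂'))) *
        (S ^ K₂' / (S + ‖z‖) ^ (m + K₂'))) ≤ ∫ z, A * B * (h₁ z + h₂ z) := by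
    apply integral_mono_of_nonneg
    · exact Filter.Eventually.of_forall fun z => by positivity
    · exact ((hint1.add hint2).const_mul (A * B))
    · exact Filter.Eventually.of_forall hbound
  refine hmono.trans ?_
  rw [integral_const_mul, integral_add hint1 hint2, hI1, hI2]
  have : A * B * (Cm + Cm) = (2 * 4 ^ p * Cm) * A * D := by
    rw [hBdef]; ring
  rw [this]
  have hfin : (2 * 4 ^ p * Cm) * A * D ≤ (2 * 4 ^ p * (Cm + 1)) * A * D := by
    apply mul_le_mul_of_nonneg_right (mul_le_mul_of_nonneg_right _ hA0) hD0
    nlinarith [pow_pos (by norm_num : (0:ℝ) < 4) p]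
  exact hfin
end

section
/- For t ∨ t′ ≤ s ∨ s′ and |y| ≤ s ∨ s′, and any positive integers K₁, K₂, there exists a constant C such that ∫_{ℝᵐ} [(t∨t′)^{K₁} / (t∨t′ + |x| + |y−z|)^{n+m+K₁}] · [(s∨s′)^{K₂} / (s∨s′ + |z|)^{m+K₂}] dz ≤ C · (s∨s′)^{K₂}/(s∨s′ + |y|)^{m+K₂} · (t∨t′)^{K₁}/(t∨t′ + |x|)^{n+K₁}. -/
open MeasureTheory Module

lemma aux_integrable_s2 (m p : ℕ) (hmp : m < p) :
    Integrable (fun z : Fin m → ℝ => ((1:ℝ) + ‖z‖) ^ (-(p:ℝ))) := by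
  apply integrable_one_add_norm
  rw [finrank_fin_fun]; exact_mod_cast hmp

lemma aux_scaled (m p : ℕ) (A : ℝ) (hA : 0 < A) (x : Fin m → ℝ) :
    (A + ‖A • x‖) ^ (-(p:ℝ)) = A ^ (-(p:ℝ)) * ((1:ℝ) + ‖x‖) ^ (-(p:ℝ)) := by
  rw [norm_smul, Real.norm_eq_abs, abs_of_pos hA, ← Real.mul_rpow hA.le (by positivity)]
  ring_nf

lemma aux_integrable' (m p : ℕ) (hmp : m < p) (A : ℝ) (hA : 0 < A) :
    Integrable (fun z : Fin m → ℝ => (A + ‖z‖) ^ (-(p:ℝ))) := by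
  rw [← integrable_comp_smul_iff volume (fun z : Fin m → ℝ => (A + ‖z‖) ^ (-(p:ℝ))) hA.ne']
  simp only [aux_scaled m p A hA]
  exact (aux_integrable_s2 m p hmp).const_mul _

lemma aux_value (m p : ℕ) (A : ℝ) (hA : 0 < A) :
    (∫ z : Fin m → ℝ, (A + ‖z‖) ^ (-(p:ℝ))) =
      A ^ m * A ^ (-(p:ℝ)) * ∫ z : Fin m → ℝ, ((1:ℝ) + ‖z‖) ^ (-(p:ℝ)) := by
  have h := Measure.integral_comp_smul_of_nonneg (μ := volume)
    (fun z : Fin m → ℝ => (A + ‖z‖) ^ (-(p:ℝ))) A (hR := hA.le)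
  rw [finrank_fin_fun] at h
  simp only [aux_scaled m p A hA, integral_const_mul, smul_eq_mul] at h
  have hApow : (0:ℝ) < A ^ m := by positivity
  field_simp at h ⊢
  rw [← h]

/-- Case 2 of Lemma 3.4: for `max t t' ≤ max s s'` and `|y| ≤ max s s'`, and any positive
integers `K₁, K₂`, there is a constant `C` with
`∫ (t∨t')^{K₁}/(t∨t'+|x|+|y-z|)^{n+m+K₁} · (s∨s')^{K₂}/(s∨s'+|z|)^{m+K₂} dz ≤
 C (s∨s')^{K₂}/(s∨s'+|y|)^{m+K₂} · (t∨t')^{K₁}/(t∨t'+|x|)^{n+K₁}`. -/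
theorem stmt2 {n m : ℕ} (hn : 0 < n) (hm : 0 < m)
    (K₁ K₂ : ℕ) (hK₁ : 0 < K₁) (hK₂ : 0 < K₂) :
    ∃ C : ℝ, 0 < C ∧
      ∀ (t t' s s' : ℝ) (x : Fin n → ℝ) (y : Fin m → ℝ),
        0 < t → 0 < t' → 0 < s → 0 < s' →
        max t t' ≤ max s s' → ‖y‖ ≤ max s s' →
        (∫ z : Fin m → ℝ,
            (max t t' ^ K₁ / (max t t' + ‖x‖ + ‖y - z‖) ^ (n + m + K₁)) *
            (max s s' ^ K₂ / (max s s' + ‖z‖) ^ (m + K₂))) ≤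
          C * (max s s' ^ K₂ / (max s s' + ‖y‖) ^ (m + K₂)) *
            (max t t' ^ K₁ / (max t t' + ‖x‖) ^ (n + K₁)) := by
  set p : ℕ := n + m + K₁ with hp
  have hmp : m < p := by omega
  set I : ℝ := ∫ z : Fin m → ℝ, ((1:ℝ) + ‖z‖) ^ (-(p:ℝ)) with hI
  have hI0 : 0 ≤ I := integral_nonneg fun z => Real.rpow_nonneg (by positivity) _
  refine ⟨2 ^ (m + K₂) * (I + 1), by positivity, ?_⟩
  intro t t' s s' x y ht ht' hs hs' hts hy
  set T := max t t' with hT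
  set S := max s s' with hS
  have hT0 : 0 < T := lt_max_of_lt_left ht
  have hS0 : 0 < S := lt_max_of_lt_left hs
  set A : ℝ := T + ‖x‖ with hA
  have hA0 : 0 < A := by positivity
  -- pointwise bound
  have hptwise : ∀ z : Fin m → ℝ,
      (T ^ K₁ / (T + ‖x‖ + ‖y - z‖) ^ (n + m + K₁)) * (S ^ K₂ / (S + ‖z‖) ^ (m + K₂))
        ≤ (T ^ K₁ / S ^ m) * (A + ‖y - z‖) ^ (-(p:ℝ)) := by
    intro z
    have hb : (0:ℝ) < A + ‖y - z‖ := by positivity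
    have h1 : (A + ‖y - z‖) ^ (-(p:ℝ)) = 1 / (T + ‖x‖ + ‖y - z‖) ^ (n + m + K₁) := by
      rw [Real.rpow_neg hb.le, Real.rpow_natCast, one_div, hA, hp]
    rw [h1]
    have h2 : S ^ K₂ / (S + ‖z‖) ^ (m + K₂) ≤ 1 / S ^ m := by
      rw [div_le_div_iff₀ (by positivity) (by positivity), one_mul]
      calc S ^ K₂ * S ^ m = S ^ (m + K₂) := by rw [← pow_add]; ring_nf
        _ ≤ (S + ‖z‖) ^ (m + K₂) :=
            pow_le_pow_left₀ (by positivity) (by linarith [norm_nonneg z]) _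
    calc (T ^ K₁ / (T + ‖x‖ + ‖y - z‖) ^ (n + m + K₁)) * (S ^ K₂ / (S + ‖z‖) ^ (m + K₂))
        ≤ (T ^ K₁ / (T + ‖x‖ + ‖y - z‖) ^ (n + m + K₁)) * (1 / S ^ m) := by
          gcongr
      _ = (T ^ K₁ / S ^ m) * (1 / (T + ‖x‖ + ‖y - z‖) ^ (n + m + K₁)) := by ring
  -- integrability of majorant
  have hint : Integrable (fun z : Fin m → ℝ =>
      (T ^ K₁ / S ^ m) * (A + ‖y - z‖) ^ (-(p:ℝ))) := by
    exact ((aux_integrable' m p hmp A hA0).comp_sub_left y).const_mul _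
  -- integral comparison
  have hmono : (∫ z : Fin m → ℝ,
      (T ^ K₁ / (T + ‖x‖ + ‖y - z‖) ^ (n + m + K₁)) * (S ^ K₂ / (S + ‖z‖) ^ (m + K₂)))
      ≤ ∫ z : Fin m → ℝ, (T ^ K₁ / S ^ m) * (A + ‖y - z‖) ^ (-(p:ℝ)) := by
    apply integral_mono_of_nonneg
    · filter_upwards with z; positivity
    · exact hint
    · filter_upwards with z; exact hptwise z
  -- compute majorant integral
  have hval : (∫ z : Fin m → ℝ, (T ^ K₁ / S ^ m) * (A + ‖y - z‖) ^ (-(p:ℝ)))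
      = (T ^ K₁ / S ^ m) * (A ^ m * A ^ (-(p:ℝ)) * I) := by
    rw [integral_const_mul, integral_sub_left_eq_self
      (fun z : Fin m → ℝ => (A + ‖z‖) ^ (-(p:ℝ))) volume y, aux_value m p A hA0]
  -- A^m * A^(-p) = (A^(n+K₁))⁻¹
  have hAm : A ^ m * A ^ (-(p:ℝ)) = (A ^ (n + K₁))⁻¹ := by
    rw [Real.rpow_neg hA0.le, Real.rpow_natCast, hp]
    have : A ^ (n + m + K₁) = A ^ (n + K₁) * A ^ m := by rw [← pow_add]; ring_nf
    rw [this, mul_inv]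
    field_simp
  -- final numeric bound
  have hfin : (T ^ K₁ / S ^ m) * ((A ^ (n + K₁))⁻¹ * I)
      ≤ 2 ^ (m + K₂) * (I + 1) * (S ^ K₂ / (S + ‖y‖) ^ (m + K₂)) * (T ^ K₁ / A ^ (n + K₁)) := by
    have hSy : (S + ‖y‖) ^ (m + K₂) ≤ 2 ^ (m + K₂) * S ^ (m + K₂) := by
      calc (S + ‖y‖) ^ (m + K₂) ≤ (2 * S) ^ (m + K₂) :=
            pow_le_pow_left₀ (by positivity) (by linarith) _
        _ = 2 ^ (m + K₂) * S ^ (m + K₂) := by rw [mul_pow]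
    have key : (1:ℝ) / S ^ m ≤ 2 ^ (m + K₂) * (S ^ K₂ / (S + ‖y‖) ^ (m + K₂)) := by
      rw [mul_div_assoc'] at *
      rw [div_le_div_iff₀ (by positivity) (by positivity), one_mul]
      calc (S + ‖y‖) ^ (m + K₂) ≤ 2 ^ (m + K₂) * S ^ (m + K₂) := hSy
        _ = 2 ^ (m + K₂) * S ^ K₂ * S ^ m := by rw [pow_add]; ring
    calc (T ^ K₁ / S ^ m) * ((A ^ (n + K₁))⁻¹ * I)
        = (I * (1 / S ^ m)) * (T ^ K₁ / A ^ (n + K₁)) := by ring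
      _ ≤ ((I + 1) * (2 ^ (m + K₂) * (S ^ K₂ / (S + ‖y‖) ^ (m + K₂)))) * (T ^ K₁ / A ^ (n + K₁)) := by
          apply mul_le_mul_of_nonneg_right _ (by positivity)
          apply mul_le_mul (by linarith) key (by positivity) (by positivity)
      _ = 2 ^ (m + K₂) * (I + 1) * (S ^ K₂ / (S + ‖y‖) ^ (m + K₂)) * (T ^ K₁ / A ^ (n + K₁)) := by
          ring
  calc (∫ z : Fin m → ℝ,
          (T ^ K₁ / (T + ‖x‖ + ‖y - z‖) ^ (n + m + K₁)) * (S ^ K₂ / (S + ‖z‖) ^ (m + K₂)))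
      ≤ (T ^ K₁ / S ^ m) * (A ^ m * A ^ (-(p:ℝ)) * I) := hmono.trans (le_of_eq hval)
    _ = (T ^ K₁ / S ^ m) * ((A ^ (n + K₁))⁻¹ * I) := by rw [hAm]
    _ ≤ 2 ^ (m + K₂) * (I + 1) * (S ^ K₂ / (S + ‖y‖) ^ (m + K₂)) * (T ^ K₁ / A ^ (n + K₁)) := hfin
end

section
/- Let ψ, φ ∈ S_F(ℝⁿ × ℝᵐ) be flag test functions, i.e., there exist ψ♯, φ♯ ∈ S_∞(ℝ^{n+m} × ℝᵐ) with ψ(x,y) = ∫_{ℝᵐ} ψ♯(x, y−z, z) dz and φ(x,y) = ∫_{ℝᵐ} φ♯(x, y−z, z) dz. Then the convolution on ℝⁿ × ℝᵐ satisfies (ψ ∗ φ)(x,y) = ∫_{ℝᵐ} (ψ♯ ∗ φ♯)(x, y−z, z) dz, where on the right the convolution is taken on ℝ^{n+m+m}. -/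
/-!
The flag projection `f ↦ ∫ f (x, y - z, z) dz` is integration along the fibres of the additive
homomorphism `(x, y, z) ↦ (x, y + z)`. The measure-preserving additive change of variables
`((x, y), z) ↦ (x, y - z, z)` turns it into integrating out the last factor of
`(ℝⁿ × ℝᵐ) × ℝᵐ`, and by Fubini and translation invariance, integrating out one factor of a
product group commutes with convolution. The Schwartz decay of `ψ♯` in its last variable,
uniformly in the others, supplies the integrable majorant needed for Fubini.
-/

open MeasureTheory

section Marginal

variable {H K 𝕜 : Type*} [RCLike 𝕜]
  [AddGroup H] [MeasurableSpace H] [MeasurableSub₂ H] {μ : Measure H} [SFinite μ]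
  [AddGroup K] [MeasurableSpace K] [MeasurableSub₂ K]
  {ν : Measure K} [SFinite ν] [ν.IsAddRightInvariant]

theorem integrable_convolution_integrand_prod_of_norm_le {f g : H × K → 𝕜} {B : K → ℝ}
    (hf : StronglyMeasurable f) (hB : Integrable B ν) (hfB : ∀ a b, ‖f (a, b)‖ ≤ B b)
    (hg : Integrable g (μ.prod ν)) (h : H) :
    Integrable (fun q : (H × K) × K => f (h - q.1.1, q.2 - q.1.2) * g q.1)
      ((μ.prod ν).prod ν) := by
  have hshear : MeasurePreserving (fun q : (H × K) × K => (q.1, q.2 - q.1.2))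
      ((μ.prod ν).prod ν) ((μ.prod ν).prod ν) :=
    (MeasurePreserving.id _).skew_product (g := fun p k => k - p.2) (by fun_prop)
      (Filter.Eventually.of_forall fun p : H × K => map_sub_right_eq_self ν p.2)
  have hdom : Integrable (fun q : (H × K) × K => ‖g q.1‖ * B (q.2 - q.1.2))
      ((μ.prod ν).prod ν) :=
    hshear.integrable_comp_of_integrable (hg.norm.mul_prod hB)
  refine hdom.mono' ?_ (Filter.Eventually.of_forall fun q => ?_)
  · exact (hf.comp_measurable (by fun_prop)).aestronglyMeasurable.mul
      (hg.aestronglyMeasurable.comp_quasiMeasurePreserving Measure.quasiMeasurePreserving_fst)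
  · rw [norm_mul, mul_comm]
    exact mul_le_mul_of_nonneg_left (hfB _ _) (norm_nonneg _)

theorem integral_convolution_snd_eq_convolution_integral_snd [MeasurableAdd K]
    {f g : H × K → 𝕜} {B : K → ℝ} (hf : StronglyMeasurable f) (hB : Integrable B ν)
    (hfB : ∀ a b, ‖f (a, b)‖ ≤ B b) (hg : Integrable g (μ.prod ν)) (h : H) :
    ∫ k, ∫ p, f (h - p.1, k - p.2) * g p ∂(μ.prod ν) ∂ν =
      ∫ a, (∫ k, f (h - a, k) ∂ν) * ∫ k, g (a, k) ∂ν ∂μ := by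
  set F : H → 𝕜 := fun a => ∫ k, f (a, k) ∂ν
  have hF : ∀ a, ‖F a‖ ≤ ∫ k, B k ∂ν := fun a =>
    norm_integral_le_of_norm_le hB (Filter.Eventually.of_forall (hfB a))
  have hFm : StronglyMeasurable F := hf.integral_prod_right'
  calc ∫ k, ∫ p, f (h - p.1, k - p.2) * g p ∂(μ.prod ν) ∂ν
      = ∫ p, ∫ k, f (h - p.1, k - p.2) * g p ∂ν ∂(μ.prod ν) :=
        (integral_integral_swap
          (integrable_convolution_integrand_prod_of_norm_le hf hB hfB hg h)).symm
    _ = ∫ p, F (h - p.1) * g p ∂(μ.prod ν) := by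
        congr 1 with p
        rw [integral_mul_const, integral_sub_right_eq_self (fun k => f (h - p.1, k))]
    _ = ∫ a, ∫ k, F (h - a) * g (a, k) ∂ν ∂μ :=
        integral_prod _ (hg.bdd_mul ((hFm.comp_measurable (by fun_prop)).aestronglyMeasurable)
          (Filter.Eventually.of_forall fun p => hF _))
    _ = ∫ a, F (h - a) * ∫ k, g (a, k) ∂ν ∂μ := by simp_rw [integral_const_mul]

end Marginal

section Flag

variable {E F : Type*} [MeasurableSpace E] [AddCommGroup F] [MeasurableSpace F]
  [MeasurableAdd₂ F] [MeasurableNeg F]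

def flagLift : (E × F) × F ≃ᵐ E × F × F where
  toFun p := (p.1.1, p.1.2 - p.2, p.2)
  invFun q := ((q.1, q.2.1 + q.2.2), q.2.2)
  left_inv p := by simp
  right_inv q := by simp
  measurable_toFun := by
    change Measurable fun p : (E × F) × F => (p.1.1, p.1.2 - p.2, p.2)
    fun_prop
  measurable_invFun := by
    change Measurable fun q : E × F × F => ((q.1, q.2.1 + q.2.2), q.2.2)
    fun_prop

@[simp]
theorem flagLift_apply (p : (E × F) × F) : flagLift p = (p.1.1, p.1.2 - p.2, p.2) := rfl

theorem measurePreserving_flagLift (μ : Measure E) (ν : Measure F) [SFinite μ] [SFinite ν]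
    [ν.IsAddRightInvariant] :
    MeasurePreserving flagLift ((μ.prod ν).prod ν) (μ.prod (ν.prod ν)) :=
  ((MeasurePreserving.id μ).prod (measurePreserving_sub_prod ν ν)).comp
    (measurePreserving_prodAssoc μ ν ν)

end Flag

open scoped SchwartzMap in
theorem SchwartzMap.exists_integrable_norm_bound {E V F : Type*} [NormedAddCommGroup E]
    [NormedSpace ℝ E] [NormedAddCommGroup V] [NormedSpace ℝ V] [NormedAddCommGroup F]
    [NormedSpace ℝ F] [FiniteDimensional ℝ F] [MeasurableSpace F] [BorelSpace F]
    (μ : Measure F) [μ.IsAddHaarMeasure] (f : 𝓢(E, V)) :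
    ∃ B : F → ℝ, Integrable B μ ∧ ∀ p c, ‖c‖ ≤ ‖p‖ → ‖f p‖ ≤ B c := by
  set k := Module.finrank ℝ F + 1
  set C := 2 ^ k * (Finset.Iic (k, 0)).sup (fun m => SchwartzMap.seminorm ℝ m.1 m.2) f
  refine ⟨fun c => C * (1 + ‖c‖) ^ (-(k : ℝ)),
    (integrable_one_add_norm (by simp [k])).const_mul C, fun p c hcp => ?_⟩
  have hdecay : ‖f p‖ ≤ C * (1 + ‖p‖) ^ (-(k : ℝ)) := by
    rw [Real.rpow_neg (by positivity), ← div_eq_mul_inv, le_div_iff₀ (by positivity),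
      Real.rpow_natCast, mul_comm]
    simpa using one_add_le_sup_seminorm_apply (𝕜 := ℝ) (m := (k, 0)) le_rfl le_rfl f p
  refine hdecay.trans (mul_le_mul_of_nonneg_left ?_ (by positivity))
  exact Real.rpow_le_rpow_of_nonpos (by positivity) (by linarith) (by simp)

theorem stmt3_general {n m : ℕ}
    (ψs φs : SchwartzMap ((Fin n → ℝ) × (Fin m → ℝ) × (Fin m → ℝ)) ℝ)
    (x : Fin n → ℝ) (y : Fin m → ℝ) :
    (∫ uv : (Fin n → ℝ) × (Fin m → ℝ),
        (∫ z : Fin m → ℝ, ψs (x - uv.1, y - uv.2 - z, z)) *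
        (∫ z : Fin m → ℝ, φs (uv.1, uv.2 - z, z))) =
      ∫ z : Fin m → ℝ,
        ∫ q : (Fin n → ℝ) × (Fin m → ℝ) × (Fin m → ℝ),
          ψs (x - q.1, y - z - q.2.1, z - q.2.2) * φs q := by
  have hlift : MeasurePreserving
      (flagLift : ((Fin n → ℝ) × (Fin m → ℝ)) × (Fin m → ℝ) ≃ᵐ _) volume volume :=
    measurePreserving_flagLift _ _
  -- `volume` on a product is not syntactically `Measure.prod`, so these are not found by inference
  have : (volume : Measure ((Fin m → ℝ) × (Fin m → ℝ))).IsAddHaarMeasure :=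
    Measure.prod.instIsAddHaarMeasure _ _
  have : (volume : Measure ((Fin n → ℝ) × (Fin m → ℝ) × (Fin m → ℝ))).IsAddHaarMeasure :=
    Measure.prod.instIsAddHaarMeasure _ _
  obtain ⟨B, hB, hψB⟩ := ψs.exists_integrable_norm_bound (volume : Measure (Fin m → ℝ))
  have key := integral_convolution_snd_eq_convolution_integral_snd (μ := volume) (ν := volume)
    (ψs.continuous.stronglyMeasurable.comp_measurable flagLift.measurable) hB
    (fun a b => hψB _ b ((norm_snd_le (flagLift (a, b)).2).trans (norm_snd_le _)))
    (hlift.integrable_comp_of_integrable φs.integrable) (x, y)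
  refine key.symm.trans ?_
  congr 1 with z
  rw [← hlift.integral_comp']
  congr 1 with p
  simp only [Function.comp_apply, flagLift_apply, Prod.fst_sub, Prod.snd_sub]
  rw [sub_sub_sub_comm]

/-- Lemma 3.3: if `ψ, φ ∈ S_F(ℝⁿ × ℝᵐ)` are the flag projections of product test functions
`ψ♯, φ♯ ∈ S_∞(ℝ^{n+m} × ℝᵐ)` (Schwartz with vanishing moments), i.e.
`ψ(x,y) = ∫ ψ♯(x, y-z, z) dz`, then `(ψ ∗ φ)(x,y) = ∫ (ψ♯ ∗ φ♯)(x, y-z, z) dz`,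
the convolution on the right being taken on `ℝ^{n+m+m}`. -/
theorem stmt3 {n m : ℕ}
    (ψs φs : SchwartzMap ((Fin n → ℝ) × (Fin m → ℝ) × (Fin m → ℝ)) ℝ)
    (hψmom1 : ∀ (α : Fin n → ℕ) (β : Fin m → ℕ) (z : Fin m → ℝ),
      ∫ xy : (Fin n → ℝ) × (Fin m → ℝ),
        ψs (xy.1, xy.2, z) * ((∏ i, xy.1 i ^ α i) * ∏ i, xy.2 i ^ β i) = 0)
    (hψmom2 : ∀ (γ : Fin m → ℕ) (x : Fin n → ℝ) (y : Fin m → ℝ),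
      ∫ z : Fin m → ℝ, ψs (x, y, z) * ∏ i, z i ^ γ i = 0)
    (hφmom1 : ∀ (α : Fin n → ℕ) (β : Fin m → ℕ) (z : Fin m → ℝ),
      ∫ xy : (Fin n → ℝ) × (Fin m → ℝ),
        φs (xy.1, xy.2, z) * ((∏ i, xy.1 i ^ α i) * ∏ i, xy.2 i ^ β i) = 0)
    (hφmom2 : ∀ (γ : Fin m → ℕ) (x : Fin n → ℝ) (y : Fin m → ℝ),
      ∫ z : Fin m → ℝ, φs (x, y, z) * ∏ i, z i ^ γ i = 0)
    (x : Fin n → ℝ) (y : Fin m → ℝ) :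
    (∫ uv : (Fin n → ℝ) × (Fin m → ℝ),
        (∫ z : Fin m → ℝ, ψs (x - uv.1, y - uv.2 - z, z)) *
        (∫ z : Fin m → ℝ, φs (uv.1, uv.2 - z, z))) =
      ∫ z : Fin m → ℝ,
        ∫ q : (Fin n → ℝ) × (Fin m → ℝ) × (Fin m → ℝ),
          ψs (x - q.1, y - z - q.2.1, z - q.2.2) * φs q :=
  stmt3_general ψs φs x y
end
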